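/- Let X be a compact subset of ℝ, T : X → X Borel measurable, and μ a T-invariant Borel probability measure. Suppose there exists a constant c > 0 such that for every Lipschitz function f : X → ℝ, the auto-covariance function Cov_f(k) = ∫ f·(f∘T^k) dμ − (∫ f dμ)² satisfies Σ_{k=1}^{∞} |Cov_f(k)| ≤ c ‖f‖_Lip², where ‖f‖_Lip = Lip(f) + ‖f‖_∞. Then there exists a constant B > 0 such that for all n ≥ 1, ∫ κ(E_n(x), μ) dμ(x) ≤ B n^{−1/4}, where E_n(x) = (1/n) Σ_{i=0}^{n−1} δ_{T^i x} is the empirical measure. -/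

import Mathlib

/-!
Fix `n` and `ε = n^(-1/4)`. On an interval `[a, a + m ε]` containing `X`, every 1-Lipschitz
function is `2 ε`-close to its piecewise linear interpolant on the grid of mesh `ε`, which is a
combination of `m = O(1/ε)` ramps with slopes in `[-1, 1]`. Hence `κ(E_n(x), μ)` is at most `4 ε`
plus the sum over the ramps `r` of `|(1/n) ∑_{i<n} r (T^i x) - ∫ r dμ|`. By invariance the
variance of a Birkhoff average is `(1/n²) ∑_{i,j<n} Cov_r(|i - j|) = O(1/n)` when the
autocovariances are summable, so each term has expectation `O(n^(-1/2)) = O(ε²)`, and the `O(1/ε)`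
terms add up to `O(ε)`.
-/

open MeasureTheory Real

noncomputable section

def kantorovich {α : Type*} [MeasurableSpace α] [PseudoMetricSpace α]
    (ν₁ ν₂ : Measure α) : ℝ :=
  ⨆ g : {g : α → ℝ // LipschitzWith 1 g}, (∫ x, g.1 x ∂ν₁ - ∫ x, g.1 x ∂ν₂)

def empiricalMeasure (T : ℝ → ℝ) (n : ℕ) (x : ℝ) : Measure ℝ :=
  (n : ENNReal)⁻¹ • ∑ i ∈ Finset.range n, Measure.dirac (T^[i] x)

open Set Finset ProbabilityTheory

def ramp (t ε x : ℝ) : ℝ := min (max (x - t) 0) ε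

section Ramp

variable {t ε x : ℝ}

lemma lipschitzWith_ramp (t ε : ℝ) : LipschitzWith 1 (ramp t ε) :=
  (((LipschitzWith.id.sub (LipschitzWith.const t)).max_const 0).min_const ε).weaken (by norm_num)

lemma ramp_mem_Icc (hε : 0 ≤ ε) : ramp t ε x ∈ Icc 0 ε :=
  ⟨le_min (le_max_right _ _) hε, min_le_right _ _⟩

lemma ramp_eq_zero_of_le (hε : 0 ≤ ε) (h : x ≤ t) : ramp t ε x = 0 := by
  rw [ramp, max_eq_right (sub_nonpos.2 h), min_eq_left hε]

lemma ramp_eq_of_add_le (h : t + ε ≤ x) : ramp t ε x = ε :=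
  min_eq_right (le_max_of_le_left (by linarith))

lemma abs_ramp_le (hε : 0 ≤ ε) : |ramp t ε x| ≤ ε := by
  rw [abs_of_nonneg (ramp_mem_Icc hε).1]
  exact (ramp_mem_Icc hε).2

lemma integrable_ramp (ν : Measure ℝ) [IsFiniteMeasure ν] (t : ℝ) (hε : 0 ≤ ε) :
    Integrable (ramp t ε) ν :=
  .of_bound (lipschitzWith_ramp t ε).continuous.aestronglyMeasurable ε
    (.of_forall fun _ => abs_ramp_le hε)

end Ramp

def gridSlope (g : ℝ → ℝ) (a ε : ℝ) (j : ℕ) : ℝ := (g (a + (j + 1) * ε) - g (a + j * ε)) / ε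

-- The piecewise linear interpolant of `g` at the nodes `a + j ε`, `j ≤ m`, as a sum of ramps.
def rampInterpolant (g : ℝ → ℝ) (a ε : ℝ) (m : ℕ) (y : ℝ) : ℝ :=
  g a + ∑ j ∈ range m, gridSlope g a ε j * ramp (a + j * ε) ε y

section Interpolant

variable {g : ℝ → ℝ} {a ε y : ℝ} {m : ℕ}

lemma abs_gridSlope_le (hg : LipschitzWith 1 g) (hε : 0 < ε) (j : ℕ) : |gridSlope g a ε j| ≤ 1 := by
  rw [gridSlope, abs_div, abs_of_pos hε, div_le_one hε]
  simpa [Real.dist_eq, add_mul, abs_of_pos hε] using hg.dist_le_mul (a + (j + 1) * ε) (a + j * ε)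

lemma rampInterpolant_succ (g : ℝ → ℝ) (a ε : ℝ) (m : ℕ) (y : ℝ) :
    rampInterpolant g a ε (m + 1) y
      = rampInterpolant g a ε m y + gridSlope g a ε m * ramp (a + m * ε) ε y := by
  simp only [rampInterpolant, sum_range_succ, add_assoc]

lemma rampInterpolant_of_le (hε : 0 < ε) (hy : a + m * ε ≤ y) :
    rampInterpolant g a ε m y = g (a + m * ε) := by
  induction m with
  | zero => simp [rampInterpolant]
  | succ m ih =>
    push_cast at hy ⊢
    rw [rampInterpolant_succ, ih (by nlinarith), ramp_eq_of_add_le (by linarith), gridSlope,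
      div_mul_cancel₀ _ hε.ne']
    ring

lemma abs_sub_rampInterpolant_le (hg : LipschitzWith 1 g) (hε : 0 < ε)
    (hy : y ∈ Icc a (a + m * ε)) : |g y - rampInterpolant g a ε m y| ≤ 2 * ε := by
  induction m with
  | zero =>
    obtain rfl : y = a := by simpa using hy
    simp [rampInterpolant, hε.le]
  | succ m ih =>
    rw [rampInterpolant_succ]
    rcases le_or_gt y (a + m * ε) with hym | hym
    · rw [ramp_eq_zero_of_le hε.le hym, mul_zero, add_zero]
      exact ih ⟨hy.1, hym⟩
    · have hy' : y ≤ a + m * ε + ε := by push_cast at hy; linarith [hy.2]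
      rw [rampInterpolant_of_le hε hym.le]
      have hgy : |g y - g (a + m * ε)| ≤ ε := by
        have := hg.dist_le_mul y (a + m * ε)
        rw [Real.dist_eq, Real.dist_eq, abs_of_pos (sub_pos.2 hym)] at this
        simp only [NNReal.coe_one, one_mul] at this
        linarith
      have hslope : |gridSlope g a ε m * ramp (a + m * ε) ε y| ≤ ε := by
        rw [abs_mul, abs_of_nonneg (ramp_mem_Icc hε.le).1]
        exact (mul_le_of_le_one_left (ramp_mem_Icc hε.le).1 (abs_gridSlope_le hg hε m)).trans
          (ramp_mem_Icc hε.le).2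
      calc |g y - (g (a + m * ε) + gridSlope g a ε m * ramp (a + m * ε) ε y)|
          ≤ |g y - g (a + m * ε)| + |gridSlope g a ε m * ramp (a + m * ε) ε y| := by
            rw [← sub_sub]; exact abs_sub _ _
        _ ≤ 2 * ε := by linarith

lemma integral_rampInterpolant (ν : Measure ℝ) [IsProbabilityMeasure ν] (hε : 0 ≤ ε) :
    ∫ y, rampInterpolant g a ε m y ∂ν
      = g a + ∑ j ∈ range m, gridSlope g a ε j * ∫ y, ramp (a + j * ε) ε y ∂ν := by
  have hint := fun t => integrable_ramp ν t hε
  simp only [rampInterpolant]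
  rw [integral_add (integrable_const _) (integrable_finsetSum _ fun j _ => (hint _).const_mul _),
    integral_const, probReal_univ, one_smul, integral_finsetSum _ fun j _ => (hint _).const_mul _]
  simp only [integral_const_mul]

end Interpolant

lemma kantorovich_nonneg {α : Type*} [MeasurableSpace α] [PseudoMetricSpace α]
    (ν₁ ν₂ : Measure α) : 0 ≤ kantorovich ν₁ ν₂ := by
  by_cases hbdd : BddAbove (range fun g : {g : α → ℝ // LipschitzWith 1 g} =>
      ∫ x, g.1 x ∂ν₁ - ∫ x, g.1 x ∂ν₂)
  · simpa [kantorovich] using le_ciSup hbdd ⟨fun _ => 0, LipschitzWith.const' 0⟩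
  · rw [kantorovich, Real.iSup_of_not_bddAbove hbdd]

lemma integral_sub_integral_le_of_abs_sub_le {α : Type*} [MeasurableSpace α]
    {ν₁ ν₂ : Measure α} [IsProbabilityMeasure ν₁] [IsProbabilityMeasure ν₂] {g G : α → ℝ}
    {η : ℝ} (hg₁ : AEStronglyMeasurable g ν₁) (hg₂ : AEStronglyMeasurable g ν₂)
    (hG₁ : Integrable G ν₁) (hG₂ : Integrable G ν₂)
    (h₁ : ∀ᵐ x ∂ν₁, |g x - G x| ≤ η) (h₂ : ∀ᵐ x ∂ν₂, |g x - G x| ≤ η) :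
    ∫ x, g x ∂ν₁ - ∫ x, g x ∂ν₂ ≤ 2 * η + (∫ x, G x ∂ν₁ - ∫ x, G x ∂ν₂) := by
  have hclose : ∀ (ν : Measure α) [IsProbabilityMeasure ν], AEStronglyMeasurable g ν →
      Integrable G ν → (∀ᵐ x ∂ν, |g x - G x| ≤ η) →
      |∫ x, g x ∂ν - ∫ x, G x ∂ν| ≤ η := by
    intro ν _ hg hG h
    have hgG : Integrable (fun x => g x - G x) ν := .of_bound (hg.sub hG.1) η h
    rw [← integral_sub ((hgG.add hG).congr (.of_forall fun x => by simp)) hG]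
    simpa using norm_integral_le_of_norm_le_const (f := fun x => g x - G x) h
  have k₁ := hclose ν₁ hg₁ hG₁ h₁
  have k₂ := hclose ν₂ hg₂ hG₂ h₂
  rw [abs_le] at k₁ k₂
  linarith [k₁.2, k₂.1]

lemma kantorovich_le_sum_ramp {ν₁ ν₂ : Measure ℝ} [IsProbabilityMeasure ν₁]
    [IsProbabilityMeasure ν₂] {a ε : ℝ} {m : ℕ} (hε : 0 < ε)
    (h₁ : ∀ᵐ y ∂ν₁, y ∈ Icc a (a + m * ε)) (h₂ : ∀ᵐ y ∂ν₂, y ∈ Icc a (a + m * ε)) :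
    kantorovich ν₁ ν₂ ≤ 4 * ε + ∑ j ∈ range m,
      |∫ y, ramp (a + j * ε) ε y ∂ν₁ - ∫ y, ramp (a + j * ε) ε y ∂ν₂| := by
  have : Nonempty {g : ℝ → ℝ // LipschitzWith 1 g} := ⟨⟨id, LipschitzWith.id⟩⟩
  refine ciSup_le fun ⟨g, hg⟩ => ?_
  have hint : ∀ (ν : Measure ℝ) [IsProbabilityMeasure ν], Integrable (rampInterpolant g a ε m) ν :=
    fun ν _ => (integrable_const _).add (integrable_finsetSum _ fun j _ =>
      ((integrable_ramp ν _ hε.le).const_mul _))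
  calc ∫ y, g y ∂ν₁ - ∫ y, g y ∂ν₂
      ≤ 2 * (2 * ε) + (∫ y, rampInterpolant g a ε m y ∂ν₁ - ∫ y, rampInterpolant g a ε m y ∂ν₂) :=
        integral_sub_integral_le_of_abs_sub_le hg.continuous.aestronglyMeasurable
          hg.continuous.aestronglyMeasurable (hint ν₁) (hint ν₂)
          (h₁.mono fun y hy => abs_sub_rampInterpolant_le hg hε hy)
          (h₂.mono fun y hy => abs_sub_rampInterpolant_le hg hε hy)
    _ = 4 * ε + ∑ j ∈ range m, gridSlope g a ε j *
          (∫ y, ramp (a + j * ε) ε y ∂ν₁ - ∫ y, ramp (a + j * ε) ε y ∂ν₂) := by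
        rw [integral_rampInterpolant _ hε.le, integral_rampInterpolant _ hε.le]
        simp only [mul_sub, sum_sub_distrib]
        ring
    _ ≤ _ := by
        gcongr with j
        exact (le_abs_self _).trans (by
          rw [abs_mul]; exact mul_le_of_le_one_left (abs_nonneg _) (abs_gridSlope_le hg hε j))

lemma MeasureTheory.MeasurePreserving.integral_comp_of_aestronglyMeasurable {α β : Type*}
    [MeasurableSpace α] [MeasurableSpace β] {μ : Measure α} {ν : Measure β} {T : α → β}
    {f : β → ℝ} (hT : MeasurePreserving T μ ν) (hf : AEStronglyMeasurable f ν) :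
    ∫ x, f (T x) ∂μ = ∫ y, f y ∂ν := by
  rw [← integral_map hT.aemeasurable (hT.map_eq ▸ hf), hT.map_eq]

lemma sum_range_nat_dist_le {a : ℕ → ℝ} (ha : ∀ k, 0 ≤ a k) (hs : Summable fun k => a (k + 1))
    {i n : ℕ} (hi : i < n) :
    ∑ j ∈ range n, a (Nat.dist i j) ≤ a 0 + 2 * ∑' k, a (k + 1) := by
  have hpart : ∀ N, ∑ k ∈ range N, a (k + 1) ≤ ∑' k, a (k + 1) := fun N =>
    hs.sum_le_tsum _ fun k _ => ha _
  have hbelow : ∑ j ∈ range i, a (Nat.dist i j) = ∑ k ∈ range i, a (k + 1) := by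
    rw [← sum_range_reflect]
    refine sum_congr rfl fun k hk => ?_
    rw [Finset.mem_range] at hk
    rw [Nat.dist_eq_sub_of_le_right (by omega)]
    congr 1
    omega
  have habove : ∑ j ∈ Ico (i + 1) n, a (Nat.dist i j) = ∑ k ∈ range (n - (i + 1)), a (k + 1) := by
    rw [sum_Ico_eq_sum_range]
    refine sum_congr rfl fun k _ => ?_
    rw [Nat.dist_eq_sub_of_le (by omega)]
    congr 1
    omega
  rw [← sum_range_add_sum_Ico _ hi, sum_range_succ, Nat.dist_self, hbelow, habove]
  linarith [hpart i, hpart (n - (i + 1))]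

lemma integral_abs_sub_integral_le_sqrt_variance {α : Type*} [MeasurableSpace α]
    {μ : Measure α} [IsProbabilityMeasure μ] {Y : α → ℝ} (hY : MemLp Y 2 μ) :
    ∫ x, |Y x - ∫ y, Y y ∂μ| ∂μ ≤ √(Var[Y; μ]) := by
  have hZ : MemLp (fun x => |Y x - ∫ y, Y y ∂μ|) 2 μ := (hY.sub (memLp_const _)).abs
  have hvar := variance_nonneg (fun x => |Y x - ∫ y, Y y ∂μ|) μ
  rw [variance_eq_sub hZ] at hvar
  rw [Real.le_sqrt (integral_nonneg fun _ => abs_nonneg _) (variance_nonneg _ _),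
    variance_eq_integral hY.aemeasurable]
  simpa [sq_abs] using hvar

namespace MeasureTheory.MeasurePreserving

variable {α : Type*} [MeasurableSpace α] {μ : Measure α} {T : α → α} {f : α → ℝ}

lemma covariance_comp_iterate_add (hT : MeasurePreserving T μ μ) (hf : AEStronglyMeasurable f μ)
    (i k : ℕ) : cov[f ∘ T^[i], f ∘ T^[k + i]; μ] = cov[f, f ∘ T^[k]; μ] := by
  have hmap := (hT.iterate i).map_eq
  have hfk := hf.comp_measurePreserving (hT.iterate k)
  rw [← hmap] at hf hfk
  rw [Function.iterate_add, ← Function.comp_assoc,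
    ← covariance_map hf hfk (hT.iterate i).aemeasurable, hmap]

lemma covariance_comp_iterate_eq_sub [IsProbabilityMeasure μ] (hT : MeasurePreserving T μ μ)
    (hf : MemLp f 2 μ) (k : ℕ) :
    cov[f, f ∘ T^[k]; μ] = ∫ x, f x * f (T^[k] x) ∂μ - (∫ x, f x ∂μ) ^ 2 := by
  rw [covariance_eq_sub hf (hf.comp_measurePreserving (hT.iterate k)), sq]
  congr 2
  exact (hT.iterate k).integral_comp_of_aestronglyMeasurable hf.1

lemma covariance_comp_iterate (hT : MeasurePreserving T μ μ)
    (hf : AEStronglyMeasurable f μ) (i j : ℕ) :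
    cov[f ∘ T^[i], f ∘ T^[j]; μ] = cov[f, f ∘ T^[Nat.dist i j]; μ] := by
  rcases le_total i j with hij | hji
  · rw [← hT.covariance_comp_iterate_add hf i, Nat.dist_eq_sub_of_le hij, Nat.sub_add_cancel hij]
  · rw [covariance_comm, ← hT.covariance_comp_iterate_add hf j, Nat.dist_eq_sub_of_le_right hji,
      Nat.sub_add_cancel hji]

lemma memLp_birkhoffAverage (hT : MeasurePreserving T μ μ) {p : ENNReal} (hf : MemLp f p μ)
    (n : ℕ) : MemLp (birkhoffAverage ℝ T f n) p μ := by
  have hsum : MemLp (∑ i ∈ range n, f ∘ T^[i]) p μ :=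
    memLp_finsetSum' _ fun i _ => hf.comp_measurePreserving (hT.iterate i)
  convert hsum.const_mul (n : ℝ)⁻¹ using 1
  ext x
  simp [birkhoffAverage, birkhoffSum]

lemma integrable_birkhoffAverage (hT : MeasurePreserving T μ μ) (hf : Integrable f μ) (n : ℕ) :
    Integrable (birkhoffAverage ℝ T f n) μ :=
  memLp_one_iff_integrable.1 (hT.memLp_birkhoffAverage (memLp_one_iff_integrable.2 hf) n)

lemma integral_birkhoffAverage (hT : MeasurePreserving T μ μ) (hf : Integrable f μ) {n : ℕ}
    (hn : n ≠ 0) : ∫ x, birkhoffAverage ℝ T f n x ∂μ = ∫ x, f x ∂μ := by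
  have hcomp : ∀ i, ∫ x, f (T^[i] x) ∂μ = ∫ x, f x ∂μ := fun i =>
    (hT.iterate i).integral_comp_of_aestronglyMeasurable hf.1
  simp only [birkhoffAverage, birkhoffSum, smul_eq_mul]
  rw [integral_const_mul, integral_finsetSum (f := fun i x => f (T^[i] x)) _ fun i _ =>
    (hT.iterate i).integrable_comp_of_integrable hf]
  simp only [hcomp, sum_const, card_range, nsmul_eq_mul]
  field_simp

variable [IsProbabilityMeasure μ]

lemma variance_birkhoffSum_le (hT : MeasurePreserving T μ μ) (hf : MemLp f 2 μ)
    (hs : Summable fun k => |cov[f, f ∘ T^[k + 1]; μ]|) (n : ℕ) :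
    Var[birkhoffSum T f n; μ] ≤ n * (Var[f; μ] + 2 * ∑' k, |cov[f, f ∘ T^[k + 1]; μ]|) := by
  have hsum : birkhoffSum T f n = ∑ i ∈ range n, f ∘ T^[i] := by
    ext x
    simp [birkhoffSum]
  have hvar : |cov[f, f ∘ T^[0]; μ]| = Var[f; μ] := by
    rw [Function.iterate_zero, Function.comp_id, covariance_self hf.aemeasurable,
      abs_of_nonneg (variance_nonneg _ _)]
  rw [hsum, variance_sum' fun i _ => hf.comp_measurePreserving (hT.iterate i)]
  calc ∑ i ∈ range n, ∑ j ∈ range n, cov[f ∘ T^[i], f ∘ T^[j]; μ]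
      ≤ ∑ i ∈ range n, ∑ j ∈ range n, |cov[f, f ∘ T^[Nat.dist i j]; μ]| := by
        gcongr with i _ j _
        rw [hT.covariance_comp_iterate hf.1]
        exact le_abs_self _
    _ ≤ ∑ _i ∈ range n, (Var[f; μ] + 2 * ∑' k, |cov[f, f ∘ T^[k + 1]; μ]|) := by
        refine sum_le_sum fun i hi => ?_
        rw [← hvar]
        exact sum_range_nat_dist_le (a := fun k => |cov[f, f ∘ T^[k]; μ]|)
          (fun _ => abs_nonneg _) hs (Finset.mem_range.1 hi)
    _ = _ := by rw [sum_const, card_range, nsmul_eq_mul]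

lemma variance_birkhoffAverage_le (hT : MeasurePreserving T μ μ) (hf : MemLp f 2 μ)
    (hs : Summable fun k => |cov[f, f ∘ T^[k + 1]; μ]|) (n : ℕ) :
    Var[birkhoffAverage ℝ T f n; μ]
      ≤ (Var[f; μ] + 2 * ∑' k, |cov[f, f ∘ T^[k + 1]; μ]|) / n := by
  have hvar : Var[birkhoffAverage ℝ T f n; μ] = (n : ℝ)⁻¹ ^ 2 * Var[birkhoffSum T f n; μ] :=
    variance_const_mul _ _ _
  rw [hvar]
  rcases Nat.eq_zero_or_pos n with rfl | hn
  · simp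
  calc (n : ℝ)⁻¹ ^ 2 * Var[birkhoffSum T f n; μ]
      ≤ (n : ℝ)⁻¹ ^ 2 * (n * (Var[f; μ] + 2 * ∑' k, |cov[f, f ∘ T^[k + 1]; μ]|)) := by
        gcongr
        exact hT.variance_birkhoffSum_le hf hs n
    _ = _ := by field_simp

lemma integral_abs_birkhoffAverage_sub_le (hT : MeasurePreserving T μ μ) (hf : MemLp f 2 μ)
    (hs : Summable fun k => |cov[f, f ∘ T^[k + 1]; μ]|) {n : ℕ} (hn : n ≠ 0) :
    ∫ x, |birkhoffAverage ℝ T f n x - ∫ y, f y ∂μ| ∂μ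
      ≤ √((Var[f; μ] + 2 * ∑' k, |cov[f, f ∘ T^[k + 1]; μ]|) / n) := by
  rw [← hT.integral_birkhoffAverage (hf.integrable one_le_two) hn]
  exact (integral_abs_sub_integral_le_sqrt_variance (hT.memLp_birkhoffAverage hf n)).trans
    (Real.sqrt_le_sqrt (hT.variance_birkhoffAverage_le hf hs n))

lemma integral_abs_birkhoffAverage_sub_le_of_mem_Icc (hT : MeasurePreserving T μ μ) {ε c : ℝ}
    (hf : Measurable f) (hfε : ∀ x, f x ∈ Icc 0 ε) (hε1 : ε ≤ 1) (hc : 0 ≤ c)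
    (hs : Summable fun k : ℕ => |∫ x, f x * f (T^[k + 1] x) ∂μ - (∫ x, f x ∂μ) ^ 2|)
    (hS : ∑' k : ℕ, |∫ x, f x * f (T^[k + 1] x) ∂μ - (∫ x, f x ∂μ) ^ 2| ≤ c * (1 + ε) ^ 2)
    {n : ℕ} (hn : n ≠ 0) :
    ∫ x, |birkhoffAverage ℝ T f n x - ∫ y, f y ∂μ| ∂μ ≤ √((1 + 8 * c) / n) := by
  have := nonempty_of_isProbabilityMeasure μ
  have hε : 0 ≤ ε := (hfε (Classical.arbitrary α)).1.trans (hfε _).2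
  have hf2 : MemLp f 2 μ := .of_bound hf.aestronglyMeasurable ε (.of_forall fun x => by
    rw [Real.norm_eq_abs, abs_of_nonneg (hfε x).1]; exact (hfε x).2)
  simp_rw [← hT.covariance_comp_iterate_eq_sub hf2] at hs hS
  have hvar : Var[f; μ] ≤ ((ε - 0) / 2) ^ 2 :=
    variance_le_sq_of_bounded (.of_forall hfε) hf.aemeasurable
  refine (hT.integral_abs_birkhoffAverage_sub_le hf2 hs hn).trans
    (Real.sqrt_le_sqrt (div_le_div_of_nonneg_right ?_ n.cast_nonneg))
  have h4 : c * (1 + ε) ^ 2 ≤ c * 4 := mul_le_mul_of_nonneg_left (by nlinarith) hc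
  nlinarith

end MeasureTheory.MeasurePreserving

section Empirical

variable {T : ℝ → ℝ} {n : ℕ} {x : ℝ}

lemma integral_empiricalMeasure (f : ℝ → ℝ) :
    ∫ y, f y ∂empiricalMeasure T n x = birkhoffAverage ℝ T f n x := by
  rw [empiricalMeasure, integral_smul_measure,
    integral_finsetSum_measure fun i _ => integrable_dirac enorm_lt_top]
  simp [birkhoffAverage, birkhoffSum]

lemma isProbabilityMeasure_empiricalMeasure (hn : n ≠ 0) :
    IsProbabilityMeasure (empiricalMeasure T n x) :=
  ⟨by simp [empiricalMeasure, ENNReal.inv_mul_cancel, hn]⟩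

lemma ae_empiricalMeasure_mem {s : Set ℝ} (hTs : MapsTo T s s)
    (hx : x ∈ s) : ∀ᵐ y ∂empiricalMeasure T n x, y ∈ s := by
  rw [ae_iff]
  simp [empiricalMeasure, hTs.iterate _ hx]

lemma kantorovich_empiricalMeasure_le_sum_ramp {μ : Measure ℝ} [IsProbabilityMeasure μ]
    {s : Set ℝ} {a ε : ℝ} {m : ℕ} (hε : 0 < ε) (hTs : MapsTo T s s) (hx : x ∈ s)
    (hμs : ∀ᵐ y ∂μ, y ∈ s) (hsa : s ⊆ Icc a (a + m * ε)) (hn : n ≠ 0) :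
    kantorovich (empiricalMeasure T n x) μ ≤ 4 * ε + ∑ j ∈ range m,
      |birkhoffAverage ℝ T (ramp (a + j * ε) ε) n x - ∫ y, ramp (a + j * ε) ε y ∂μ| := by
  have := isProbabilityMeasure_empiricalMeasure (T := T) (x := x) hn
  simpa only [integral_empiricalMeasure] using kantorovich_le_sum_ramp hε
    ((ae_empiricalMeasure_mem hTs hx).mono fun y hy => hsa hy) (hμs.mono fun y hy => hsa hy)

end Empirical

lemma integral_le_add_card_mul_of_ae_le_add_sum {α ι : Type*} [MeasurableSpace α]
    {μ : Measure α} [IsProbabilityMeasure μ] {φ : α → ℝ} {L : ι → α → ℝ} {s : Finset ι}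
    {C δ : ℝ} (hφ : 0 ≤ᵐ[μ] φ) (hle : ∀ᵐ x ∂μ, φ x ≤ C + ∑ j ∈ s, L j x)
    (hL : ∀ j ∈ s, Integrable (L j) μ) (hLδ : ∀ j ∈ s, ∫ x, L j x ∂μ ≤ δ) :
    ∫ x, φ x ∂μ ≤ C + #s * δ := by
  have hsum : Integrable (fun x => ∑ j ∈ s, L j x) μ := integrable_finsetSum _ hL
  calc ∫ x, φ x ∂μ ≤ ∫ x, (C + ∑ j ∈ s, L j x) ∂μ :=
        integral_mono_of_nonneg hφ ((integrable_const _).add hsum) hle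
    _ = C + ∑ j ∈ s, ∫ x, L j x ∂μ := by
        rw [integral_add (integrable_const _) hsum, integral_finsetSum _ hL]
        simp
    _ ≤ C + #s * δ := by
        gcongr
        exact (sum_le_card_nsmul s _ _ hLδ).trans_eq (nsmul_eq_mul _ _)

lemma sqrt_div_eq_mul_rpow_neg_one_div_four_sq {C x : ℝ} (hC : 0 ≤ C) (hx : 0 ≤ x) :
    √(C / x) = √C * (x ^ (-(1 / 4 : ℝ))) ^ 2 := by
  have hx4 : ((x ^ (-(1 / 4 : ℝ))) ^ 2) ^ 2 = x⁻¹ := by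
    rw [← pow_mul, ← Real.rpow_natCast, ← Real.rpow_mul hx, ← Real.rpow_neg_one]
    norm_num
  rw [div_eq_mul_inv, ← hx4, Real.sqrt_mul hC, Real.sqrt_sq (by positivity)]

lemma add_natCeil_div_mul_sq_le {R D ε : ℝ} (hR : 0 ≤ R) (hD : 0 ≤ D) (hε : 0 < ε)
    (hε1 : ε ≤ 1) : 4 * ε + ⌈2 * R / ε⌉₊ * (D * ε ^ 2) ≤ (4 + (2 * R + 1) * D) * ε := by
  have hm : (⌈2 * R / ε⌉₊ : ℝ) ≤ 2 * R / ε + 1 := (Nat.ceil_lt_add_one (by positivity)).le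
  have hmD : (⌈2 * R / ε⌉₊ : ℝ) * (D * ε ^ 2) ≤ 2 * R * D * ε + D * ε * ε :=
    calc (⌈2 * R / ε⌉₊ : ℝ) * (D * ε ^ 2) ≤ (2 * R / ε + 1) * (D * ε ^ 2) := by gcongr
      _ = 2 * R * D * ε + D * ε * ε := by field_simp
  nlinarith [mul_le_mul_of_nonneg_left hε1 (mul_nonneg hD hε.le)]

/-- If for every Lipschitz `f` (with Lipschitz constant `Lf` and sup bound `Mf` on `X`)
the auto-covariance function satisfies `∑_{k≥1} |Cov_f(k)| ≤ c (Lf + Mf)²`, then the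
expected Kantorovich distance of the empirical measure to `μ` is `O(n^{-1/4})`. -/
theorem expected_kantorovich_empirical_bound
    (X : Set ℝ) (hX : IsCompact X) (T : ℝ → ℝ) (hT : Measurable T)
    (hTX : Set.MapsTo T X X)
    (μ : Measure ℝ) [IsProbabilityMeasure μ] (hμX : μ X = 1) (hinv : μ.map T = μ)
    (c : ℝ) (hc : 0 < c)
    (hcov : ∀ (f : ℝ → ℝ), Measurable f → ∀ Lf Mf : ℝ,
      (∀ x ∈ X, ∀ y ∈ X, |f x - f y| ≤ Lf * dist x y) →
      (∀ x ∈ X, |f x| ≤ Mf) →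
      Summable (fun k : ℕ =>
        |∫ x, f x * f (T^[k + 1] x) ∂μ - (∫ x, f x ∂μ) ^ 2|) ∧
      ∑' k : ℕ, |∫ x, f x * f (T^[k + 1] x) ∂μ - (∫ x, f x ∂μ) ^ 2|
        ≤ c * (Lf + Mf) ^ 2) :
    ∃ B : ℝ, 0 < B ∧ ∀ n : ℕ, 1 ≤ n →
      ∫ x, kantorovich (empiricalMeasure T n x) μ ∂μ
        ≤ B * (n : ℝ) ^ (-(1 / 4 : ℝ)) := by
  have hμT : MeasurePreserving T μ μ := ⟨hT, hinv⟩
  have hXae : ∀ᵐ x ∂μ, x ∈ X := (prob_compl_eq_zero_iff hX.isClosed.measurableSet).2 hμX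
  obtain ⟨R, hR, hXR⟩ := hX.isBounded.subset_closedBall_lt 0 (0 : ℝ)
  rw [Real.closedBall_eq_Icc, zero_sub, zero_add] at hXR
  refine ⟨4 + (2 * R + 1) * √(1 + 8 * c), by positivity, fun n hn => ?_⟩
  set ε := (n : ℝ) ^ (-(1 / 4 : ℝ))
  have hε : 0 < ε := Real.rpow_pos_of_pos (by positivity) _
  have hε1 : ε ≤ 1 := Real.rpow_le_one_of_one_le_of_nonpos (by exact_mod_cast hn) (by norm_num)
  have hXm : X ⊆ Icc (-R) (-R + ⌈2 * R / ε⌉₊ * ε) := fun x hx =>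
    ⟨(hXR hx).1, by linarith [(hXR hx).2, (div_le_iff₀ hε).1 (Nat.le_ceil (2 * R / ε))]⟩
  have hL : ∀ j : ℕ, ∫ x, |birkhoffAverage ℝ T (ramp (-R + j * ε) ε) n x
      - ∫ y, ramp (-R + j * ε) ε y ∂μ| ∂μ ≤ √(1 + 8 * c) * ε ^ 2 := fun j => by
    have hramp := lipschitzWith_ramp (-R + j * ε) ε
    have hcovj := hcov _ hramp.continuous.measurable 1 ε
      (fun x _ y _ => by simpa [Real.dist_eq] using hramp.dist_le_mul x y)
      (fun x _ => abs_ramp_le hε.le)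
    rw [← sqrt_div_eq_mul_rpow_neg_one_div_four_sq (by positivity) n.cast_nonneg]
    exact hμT.integral_abs_birkhoffAverage_sub_le_of_mem_Icc hramp.continuous.measurable
      (fun _ => ramp_mem_Icc hε.le) hε1 hc.le hcovj.1 hcovj.2 (by omega)
  refine (integral_le_add_card_mul_of_ae_le_add_sum
    (.of_forall fun _ => kantorovich_nonneg _ _)
    (hXae.mono fun x hx => kantorovich_empiricalMeasure_le_sum_ramp hε hTX hx hXae hXm (by omega))
    (fun j _ => ((hμT.integrable_birkhoffAverage (integrable_ramp μ _ hε.le) n).sub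
      (integrable_const _)).abs) (fun j _ => hL j)).trans ?_
  simpa using add_natCeil_div_mul_sq_le hR.le (Real.sqrt_nonneg _) hε hε1
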